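/- For every generalised nice set S ⊆ X, the set S ∪ X_F is a generalised nice set, where X_F = {{0,i} : i ∈ I_0}. In contrast, for every non-empty generalised nice set S ⊆ X, the set S ∪ {{i,i} : i ∈ I} is never a generalised nice set. -/
import Mathlib


/-- The seven lines of the Fano plane. -/
def fanoLines : List (List ℕ) := [[1,2,5],[5,6,7],[7,4,1],[1,3,6],[6,4,2],[2,7,3],[3,4,5]]

/-- The Fano operation `*` extended to `I₀ = {0,…,7}`: `0*i = i*0 = i`, `i*i = 0`,
and for distinct `i, j ∈ I` it is the third point on the line through `i` and `j`. -/
def fstar (i j : ℕ) : ℕ :=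
  if i = j then 0
  else if i = 0 then j
  else if j = 0 then i
  else
    match fanoLines.find? (fun l => l.contains i && l.contains j) with
    | some l => (l.filter (fun x => x != i && x != j)).headD 0
    | none => 0

/-- The points of the Fano plane. -/
def I : Set ℕ := {1,2,3,4,5,6,7}

/-- The extended point set `I₀ = I ∪ {0}`. -/
def I0 : Set ℕ := {0,1,2,3,4,5,6,7}

/-- `X₀`: unordered pairs from `I₀` (repetitions allowed). -/
def X0 : Set (Sym2 ℕ) := {z | ∃ i ∈ I0, ∃ j ∈ I0, z = s(i,j)}

/-- `X`: unordered pairs of two distinct points of `I`. -/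
def X : Set (Sym2 ℕ) := {z | ∃ i ∈ I, ∃ j ∈ I, i ≠ j ∧ z = s(i,j)}

/-- `X_F = {{0,i} : i ∈ I₀}`. -/
def XF : Set (Sym2 ℕ) := {z | ∃ i ∈ I0, z = s(0,i)}

/-- `P_{a,b,c}`. -/
def P (a b c : ℕ) : Set (Sym2 ℕ) :=
  {s(a,b), s(b,c), s(c,a), s(a, fstar b c), s(b, fstar c a), s(c, fstar a b)}

/-- A generalised nice set: a subset of `X₀` such that `{a,b},{a*b,c} ∈ T` implies
`P_{a,b,c} ⊆ T` for all `a, b, c ∈ I₀`. -/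
def IsGNS (T : Set (Sym2 ℕ)) : Prop :=
  T ⊆ X0 ∧ ∀ a ∈ I0, ∀ b ∈ I0, ∀ c ∈ I0,
    s(a,b) ∈ T → s(fstar a b, c) ∈ T → P a b c ⊆ T

/-- A nice set: a subset of `X` such that for all generative `i, j, k ∈ I`,
`{i,j},{i*j,k} ∈ T` implies `P_{i,j,k} ⊆ T`. -/
def IsNice (T : Set (Sym2 ℕ)) : Prop :=
  T ⊆ X ∧ ∀ i ∈ I, ∀ j ∈ I, ∀ k ∈ I, i ≠ j → i ≠ k → j ≠ k → k ≠ fstar i j →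
    s(i,j) ∈ T → s(fstar i j, k) ∈ T → P i j k ⊆ T

/-- The smallest generalised nice set containing `S`. -/
def gnsClosure (S : Set (Sym2 ℕ)) : Set (Sym2 ℕ) := ⋂₀ {T | IsGNS T ∧ S ⊆ T}

/-- A collineation of the Fano plane, realised as a permutation of `ℕ` fixing the
complement of `I` and preserving collinearity. -/
def IsColl (σ : Equiv.Perm ℕ) : Prop :=
  (∀ n, n ∉ I → σ n = n) ∧
  ∀ i ∈ I, ∀ j ∈ I, i ≠ j → σ (fstar i j) = fstar (σ i) (σ j)


lemma fstar_zero_left (a : ℕ) : fstar 0 a = a := by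
  by_cases h : (0:ℕ) = a
  · simp [fstar, ← h]
  · simp [fstar, h]

lemma fstar_zero_right (a : ℕ) : fstar a 0 = a := by
  by_cases h : a = 0
  · simp [fstar, h]
  · simp [fstar, h]

lemma fstar_self (a : ℕ) : fstar a a = 0 := by simp [fstar]

lemma fstar_fact : ∀ b ∈ Finset.range 8, ∀ c ∈ Finset.range 8,
    fstar b c < 8 ∧ (fstar b c = 0 → b = c) ∧ (b ≠ 0 → c ≠ 0 → b ≠ c → fstar b c ≠ 0) := by
  decide

lemma mem_I_iff {n : ℕ} : n ∈ I ↔ 1 ≤ n ∧ n < 8 := by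
  simp [I]; omega

lemma mem_I0_iff {n : ℕ} : n ∈ I0 ↔ n < 8 := by
  simp [I0]; omega

lemma fstar_lt {b c : ℕ} (hb : b < 8) (hc : c < 8) : fstar b c < 8 :=
  (fstar_fact b (Finset.mem_range.mpr hb) c (Finset.mem_range.mpr hc)).1

lemma fstar_eq_zero {b c : ℕ} (hb : b < 8) (hc : c < 8) (h : fstar b c = 0) : b = c :=
  (fstar_fact b (Finset.mem_range.mpr hb) c (Finset.mem_range.mpr hc)).2.1 h

lemma fstar_ne_zero {b c : ℕ} (hb : b < 8) (hc : c < 8) (hb0 : b ≠ 0) (hc0 : c ≠ 0)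
    (hbc : b ≠ c) : fstar b c ≠ 0 :=
  (fstar_fact b (Finset.mem_range.mpr hb) c (Finset.mem_range.mpr hc)).2.2 hb0 hc0 hbc

theorem gns_union_XF_and_not_all_diags :
    (∀ S : Set (Sym2 ℕ), S ⊆ X → IsGNS S → IsGNS (S ∪ XF)) ∧
    (∀ S : Set (Sym2 ℕ), S ⊆ X → IsGNS S → S.Nonempty →
      ¬ IsGNS (S ∪ {z | ∃ i ∈ I, z = s(i,i)})) := by
  constructor
  · -- Part 1
    intro S hSX hS
    constructor
    · intro z hz
      rcases hz with hz | hz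
      · rcases hSX hz with ⟨i, hi, j, hj, _, rfl⟩
        rw [mem_I_iff] at hi hj
        exact ⟨i, mem_I0_iff.mpr hi.2, j, mem_I0_iff.mpr hj.2, rfl⟩
      · rcases hz with ⟨i, hi, rfl⟩
        exact ⟨0, mem_I0_iff.mpr (by norm_num), i, hi, rfl⟩
    · intro a ha b hb c hc h1 h2
      rw [mem_I0_iff] at ha hb hc
      rcases h1 with h1 | h1
      · rcases h2 with h2 | h2
        · exact (hS.2 a (mem_I0_iff.mpr ha) b (mem_I0_iff.mpr hb) c (mem_I0_iff.mpr hc)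
            h1 h2).trans Set.subset_union_left
        · rcases h2 with ⟨i, hi, heq⟩
          rw [Sym2.eq_iff] at heq
          have hc0 : c = 0 ∨ fstar a b = 0 := by tauto
          rcases hc0 with rfl | h0
          · intro z hz
            simp only [P, Set.mem_insert_iff, Set.mem_singleton_iff] at hz
            rcases hz with rfl | rfl | rfl | rfl | rfl | rfl
            · exact Or.inl h1
            · exact Or.inr ⟨b, mem_I0_iff.mpr hb, Sym2.eq_swap⟩
            · exact Or.inr ⟨a, mem_I0_iff.mpr ha, rfl⟩
            · rw [fstar_zero_right]; exact Or.inl h1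
            · rw [fstar_zero_left, Sym2.eq_swap]; exact Or.inl h1
            · exact Or.inr ⟨fstar a b, mem_I0_iff.mpr (fstar_lt ha hb), rfl⟩
          · exfalso
            have hab : a = b := fstar_eq_zero ha hb h0
            subst hab
            rcases hSX h1 with ⟨p, hp, q, hq, hpq, heq'⟩
            rw [Sym2.eq_iff] at heq'
            rcases heq' with ⟨h1', h2'⟩ | ⟨h1', h2'⟩ <;> omega
      · rcases h1 with ⟨i, hi, heq⟩
        rw [Sym2.eq_iff] at heq
        have hab0 : a = 0 ∨ b = 0 := by tauto
        rcases hab0 with rfl | rfl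
        · rw [fstar_zero_left] at h2
          intro z hz
          simp only [P, Set.mem_insert_iff, Set.mem_singleton_iff] at hz
          rcases hz with rfl | rfl | rfl | rfl | rfl | rfl
          · exact Or.inr ⟨b, mem_I0_iff.mpr hb, rfl⟩
          · exact h2
          · exact Or.inr ⟨c, mem_I0_iff.mpr hc, Sym2.eq_swap⟩
          · exact Or.inr ⟨fstar b c, mem_I0_iff.mpr (fstar_lt hb hc), rfl⟩
          · rw [fstar_zero_right]; exact h2
          · rw [fstar_zero_left, Sym2.eq_swap]; exact h2
        · rw [fstar_zero_right] at h2
          intro z hz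
          simp only [P, Set.mem_insert_iff, Set.mem_singleton_iff] at hz
          rcases hz with rfl | rfl | rfl | rfl | rfl | rfl
          · exact Or.inr ⟨a, mem_I0_iff.mpr ha, Sym2.eq_swap⟩
          · exact Or.inr ⟨c, mem_I0_iff.mpr hc, rfl⟩
          · rw [Sym2.eq_swap]; exact h2
          · rw [fstar_zero_left]; exact h2
          · exact Or.inr ⟨fstar c a, mem_I0_iff.mpr (fstar_lt hc ha), rfl⟩
          · rw [fstar_zero_right, Sym2.eq_swap]; exact h2
  · -- Part 2
    intro S hSX hS hne hT
    obtain ⟨z, hz⟩ := hne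
    obtain ⟨i, hi, j, hj, hij, rfl⟩ := hSX hz
    have hi' := mem_I_iff.mp hi
    have hj' := mem_I_iff.mp hj
    have hk : fstar i j ∈ I := by
      rw [mem_I_iff]
      have h1 := fstar_lt hi'.2 hj'.2
      have h2 := fstar_ne_zero hi'.2 hj'.2 (by omega) (by omega) hij
      omega
    have hi0 : i ∈ I0 := mem_I0_iff.mpr hi'.2
    have hj0 : j ∈ I0 := mem_I0_iff.mpr hj'.2
    have hk0 : fstar i j ∈ I0 := mem_I0_iff.mpr (fstar_lt hi'.2 hj'.2)
    have hP1 := hT.2 i hi0 j hj0 (fstar i j) hk0 (Or.inl hz)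
      (Or.inr ⟨fstar i j, hk, rfl⟩)
    have hjk : s(j, fstar i j) ∈ S ∪ {z | ∃ i ∈ I, z = s(i,i)} := hP1 (by simp [P])
    have hkj : s(fstar i j, j) ∈ S ∪ {z | ∃ i ∈ I, z = s(i,i)} := by
      rw [Sym2.eq_swap]; exact hjk
    have hP2 := hT.2 i hi0 j hj0 j hj0 (Or.inl hz) hkj
    have hbad : s(i, fstar j j) ∈ S ∪ {z | ∃ i ∈ I, z = s(i,i)} := hP2 (by simp [P])
    rw [fstar_self] at hbad
    rcases hbad with h | h
    · rcases hSX h with ⟨p, hp, q, hq, hpq, heq⟩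
      rw [Sym2.eq_iff] at heq
      rw [mem_I_iff] at hp hq
      omega
    · rcases h with ⟨m, hm, heq⟩
      rw [Sym2.eq_iff] at heq
      rw [mem_I_iff] at hm
      omega
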